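/- arXiv:1704.05394 — 5 statements merged into one kernel-verified Lean document; each statement's English description precedes it below -/
import Mathlib

section
/- Let U ⊂ V be a nonempty proper subset. For every β ∈ ℝ^V, writing β = (β_U, β_{U^c}), the density of ν_V^{W,θ,η} factorizes pointwise as the product of a marginal and a conditional density: f_V^{W,θ,η}(β) = f_U^{W_{U,U},θ_U,η̂}(β_U) · f_{U^c}^{W̌,θ_{U^c},η̌}(β_{U^c}), where η̂_i = η_i + Σ_{j∈U^c} W_{i,j} θ_j for i ∈ U, and, whenever (H_β)_{U,U} is positive definite, W̌ = W_{U^c,U^c} + W_{U^c,U} ((H_β)_{U,U})^{-1} W_{U,U^c} and η̌ = η_{U^c} + W_{U^c,U} ((H_β)_{U,U})^{-1} η_U; here f_S^{W',θ',η'} denotes the density of ν_S^{W',θ',η'}, and both sides are understood to vanish when (H_β)_{U,U} is not positive definite. -/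
/-!
Split `V = U ⊔ Uᶜ` and write `H_β = [[A, B], [Bᵀ, D]]` with `A = (H_β)_{U,U}`,
`B = -W_{U,Uᶜ}`, `D = (H_β)_{Uᶜ,Uᶜ}`. The Schur complement `S = D - Bᵀ A⁻¹ B` is
`2 diag(β_{Uᶜ}) - W̌`, and when `A > 0` all three factors of the density split:
`H_β > 0 ↔ S > 0`, `det H_β = det A · det S`, and the block inverse formula gives
`⟨η, H_β⁻¹ η⟩ = ⟨η_U, A⁻¹ η_U⟩ + ⟨η̌, S⁻¹ η̌⟩`, after which the remaining terms of the
exponent regroup as the exponents of the marginal (with `η̂ = η_U - B θ_{Uᶜ}`) and of the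
conditional density.
-/

open MeasureTheory Matrix

/-- The matrix `H_β = 2 diag(β) - W`. -/
noncomputable def Hmat {V : Type*} [Fintype V] [DecidableEq V]
    (W : Matrix V V ℝ) (β : V → ℝ) : Matrix V V ℝ :=
  Matrix.diagonal (fun i => 2 * β i) - W

open scoped Classical in
/-- The density of the measure `ν_V^{W,θ,η}` with respect to Lebesgue measure. -/
noncomputable def nuDens {V : Type*} [Fintype V] [DecidableEq V]
    (W : Matrix V V ℝ) (θ η : V → ℝ) (β : V → ℝ) : ℝ :=
  if (Hmat W β).PosDef then
    (2 / Real.pi) ^ ((Fintype.card V : ℝ) / 2) *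
      Real.exp (-(1/2) * (θ ⬝ᵥ ((Hmat W β) *ᵥ θ)) - (1/2) * (η ⬝ᵥ ((Hmat W β)⁻¹ *ᵥ η))
        + η ⬝ᵥ θ) *
      (∏ i, θ i) / Real.sqrt (Hmat W β).det
  else 0

namespace Matrix

variable {m n R : Type*} [Fintype m] [Fintype n]

omit [Fintype m] [Fintype n] in
theorem posDef_submatrix_equiv [Ring R] [PartialOrder R] [StarRing R] {M : Matrix n n R}
    (e : m ≃ n) : (M.submatrix e e).PosDef ↔ M.PosDef :=
  ⟨fun h => by simpa using h.submatrix e.symm.injective, fun h => h.submatrix e.injective⟩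

variable [DecidableEq m] [DecidableEq n]

open scoped ComplexOrder in
theorem posDef_fromBlocks₁₁_iff {𝕜 : Type*} [RCLike 𝕜] {A : Matrix m m 𝕜} (B : Matrix m n 𝕜)
    (D : Matrix n n 𝕜) (hA : A.PosDef) :
    (fromBlocks A B Bᴴ D).PosDef ↔ (D - Bᴴ * A⁻¹ * B).PosDef := by
  let := hA.isUnit.invertible
  have hdet : (fromBlocks A B Bᴴ D).det = A.det * (D - Bᴴ * A⁻¹ * B).det := by
    rw [det_fromBlocks₁₁, invOf_eq_nonsing_inv]
  constructor
  · intro h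
    refine ((PosDef.fromBlocks₁₁ B D hA).1 h.posSemidef).posDef_iff_det_ne_zero.2 fun hS => ?_
    exact h.det_pos.ne' (by rw [hdet, hS, mul_zero])
  · intro h
    refine ((PosDef.fromBlocks₁₁ B D hA).2 h.posSemidef).posDef_iff_det_ne_zero.2 ?_
    rw [hdet]
    exact mul_ne_zero hA.det_pos.ne' h.det_pos.ne'

variable [CommRing R]

omit [DecidableEq n] in
theorem IsSymm.dotProduct_mulVec_comm {A : Matrix n n R} (hA : A.IsSymm) (u v : n → R) :
    u ⬝ᵥ A *ᵥ v = v ⬝ᵥ A *ᵥ u := by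
  conv_lhs => rw [← hA.eq]
  exact dotProduct_transpose_mulVec A u v

omit [DecidableEq m] [DecidableEq n] in
theorem IsSymm.dotProduct_mulVec_mulVec {A : Matrix m m R} (hA : A.IsSymm) (B : Matrix m n R)
    (u : m → R) (v : n → R) : u ⬝ᵥ A *ᵥ B *ᵥ v = Bᵀ *ᵥ A *ᵥ u ⬝ᵥ v := by
  rw [hA.dotProduct_mulVec_comm, dotProduct_comm, ← dotProduct_transpose_mulVec, dotProduct_comm]

theorem sumElim_dotProduct_inv_fromBlocks_mulVec {A : Matrix m m R} (B : Matrix m n R)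
    (D : Matrix n n R) (hA : IsUnit A.det) (hS : IsUnit (D - Bᵀ * A⁻¹ * B).det) (hAs : A.IsSymm)
    (a : m → R) (b : n → R) :
    (a ⊕ᵥ b) ⬝ᵥ (fromBlocks A B Bᵀ D)⁻¹ *ᵥ (a ⊕ᵥ b) =
      a ⬝ᵥ A⁻¹ *ᵥ a +
        (b - (Bᵀ * A⁻¹) *ᵥ a) ⬝ᵥ (D - Bᵀ * A⁻¹ * B)⁻¹ *ᵥ (b - (Bᵀ * A⁻¹) *ᵥ a) := by
  let := A.invertibleOfIsUnitDet hA
  let : Invertible (D - Bᵀ * ⅟A * B) := by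
    rw [invOf_eq_nonsing_inv]; exact invertibleOfIsUnitDet _ hS
  let := fromBlocks₁₁Invertible A B Bᵀ D
  rw [← invOf_eq_nonsing_inv, invOf_fromBlocks₁₁_eq]
  simp only [invOf_eq_nonsing_inv, fromBlocks_mulVec, sumElim_dotProduct_sumElim, add_mulVec,
    neg_mulVec, ← mulVec_mulVec, dotProduct_add, dotProduct_neg, sub_dotProduct, dotProduct_sub,
    mulVec_sub, hAs.inv.dotProduct_mulVec_mulVec, Sum.elim_comp_inl, Sum.elim_comp_inr]
  ring

end Matrix

noncomputable def nuExponent {V : Type*} [Fintype V] [DecidableEq V]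
    (H : Matrix V V ℝ) (θ η : V → ℝ) : ℝ :=
  -(1/2) * (θ ⬝ᵥ (H *ᵥ θ)) - (1/2) * (η ⬝ᵥ (H⁻¹ *ᵥ η)) + η ⬝ᵥ θ

open scoped Classical in
noncomputable def nuDensH {V : Type*} [Fintype V] [DecidableEq V]
    (H : Matrix V V ℝ) (θ η : V → ℝ) : ℝ :=
  if H.PosDef then
    (2 / Real.pi) ^ ((Fintype.card V : ℝ) / 2) * Real.exp (nuExponent H θ η) * (∏ i, θ i) /
      Real.sqrt H.det
  else 0

section Reindex

variable {m V : Type*} [Fintype V] [DecidableEq V]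

theorem nuDens_eq_nuDensH (W : Matrix V V ℝ) (θ η β : V → ℝ) :
    nuDens W θ η β = nuDensH (Hmat W β) θ η := rfl

theorem nuDensH_eq_zero_of_not_posDef_submatrix {H : Matrix V V ℝ} {f : m → V}
    (hf : Function.Injective f) (h : ¬(H.submatrix f f).PosDef) (θ η : V → ℝ) :
    nuDensH H θ η = 0 :=
  if_neg fun hH => h (hH.submatrix hf)

variable [Fintype m] [DecidableEq m]

theorem Hmat_submatrix (W : Matrix V V ℝ) (β : V → ℝ) {f : m → V} (hf : Function.Injective f) :
    (Hmat W β).submatrix f f = Hmat (W.submatrix f f) (fun i => β (f i)) := by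
  ext i j
  simp [Hmat, diagonal_apply, hf.eq_iff]

theorem nuExponent_submatrix_equiv (e : m ≃ V) (H : Matrix V V ℝ) (θ η : V → ℝ) :
    nuExponent (H.submatrix e e) (θ ∘ e) (η ∘ e) = nuExponent H θ η := by
  simp only [nuExponent, inv_submatrix_equiv, submatrix_mulVec_equiv, Function.comp_assoc,
    e.self_comp_symm, Function.comp_id, comp_equiv_dotProduct_comp_equiv]

theorem nuDensH_submatrix_equiv (e : m ≃ V) (H : Matrix V V ℝ) (θ η : V → ℝ) :
    nuDensH (H.submatrix e e) (θ ∘ e) (η ∘ e) = nuDensH H θ η := by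
  simp only [nuDensH, det_submatrix_equiv_self, nuExponent_submatrix_equiv,
    Fintype.card_congr e, Function.comp_apply, e.prod_comp]
  classical
  exact if_congr (posDef_submatrix_equiv e) rfl rfl

theorem nuDens_submatrix_equiv (e : m ≃ V) (W : Matrix V V ℝ) (θ η β : V → ℝ) :
    nuDens (W.submatrix e e) (θ ∘ e) (η ∘ e) (β ∘ e) = nuDens W θ η β := by
  rw [nuDens_eq_nuDensH, nuDens_eq_nuDensH, ← nuDensH_submatrix_equiv e,
    Hmat_submatrix W β e.injective]
  rfl

end Reindex

section Blocks

variable {m n : Type*} [Fintype m] [Fintype n] [DecidableEq m] [DecidableEq n]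

theorem nuExponent_fromBlocks {A : Matrix m m ℝ} (B : Matrix m n ℝ) (D : Matrix n n ℝ)
    (hA : IsUnit A.det) (hS : IsUnit (D - Bᵀ * A⁻¹ * B).det) (hAs : A.IsSymm)
    (x a : m → ℝ) (y b : n → ℝ) :
    nuExponent (fromBlocks A B Bᵀ D) (x ⊕ᵥ y) (a ⊕ᵥ b) =
      nuExponent A x (a - B *ᵥ y) + nuExponent (D - Bᵀ * A⁻¹ * B) y (b - (Bᵀ * A⁻¹) *ᵥ a) := by
  have h1 : y ⬝ᵥ Bᵀ *ᵥ x = x ⬝ᵥ B *ᵥ y := dotProduct_transpose_mulVec B y x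
  have h2 : B *ᵥ y ⬝ᵥ x = x ⬝ᵥ B *ᵥ y := dotProduct_comm _ _
  have h3 : B *ᵥ y ⬝ᵥ A⁻¹ *ᵥ a = a ⬝ᵥ A⁻¹ *ᵥ B *ᵥ y := hAs.inv.dotProduct_mulVec_comm _ _
  have h4 : y ⬝ᵥ Bᵀ *ᵥ A⁻¹ *ᵥ B *ᵥ y = B *ᵥ y ⬝ᵥ A⁻¹ *ᵥ B *ᵥ y := by
    rw [dotProduct_transpose_mulVec, dotProduct_comm]
  unfold nuExponent
  rw [sumElim_dotProduct_inv_fromBlocks_mulVec B D hA hS hAs]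
  simp only [fromBlocks_mulVec, sumElim_dotProduct_sumElim, sub_mulVec, ← mulVec_mulVec,
    mulVec_sub, dotProduct_sub, sub_dotProduct, dotProduct_add, Sum.elim_comp_inl,
    Sum.elim_comp_inr, h1, h2, h3, h4, hAs.inv.dotProduct_mulVec_mulVec]
  ring

theorem nuDensH_fromBlocks {A : Matrix m m ℝ} (B : Matrix m n ℝ) (D : Matrix n n ℝ)
    (hA : A.PosDef) (x a : m → ℝ) (y b : n → ℝ) :
    nuDensH (fromBlocks A B Bᵀ D) (x ⊕ᵥ y) (a ⊕ᵥ b) =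
      nuDensH A x (a - B *ᵥ y) * nuDensH (D - Bᵀ * A⁻¹ * B) y (b - (Bᵀ * A⁻¹) *ᵥ a) := by
  have hSchur := posDef_fromBlocks₁₁_iff B D hA
  rw [conjTranspose_eq_transpose_of_trivial] at hSchur
  by_cases hS : (D - Bᵀ * A⁻¹ * B).PosDef
  · have hAs : A.IsSymm := isHermitian_iff_isSymm.1 hA.isHermitian
    have hdet : (fromBlocks A B Bᵀ D).det = A.det * (D - Bᵀ * A⁻¹ * B).det := by
      let := hA.isUnit.invertible
      rw [det_fromBlocks₁₁, invOf_eq_nonsing_inv]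
    have hpow : (2 / Real.pi) ^ ((Fintype.card (m ⊕ n) : ℝ) / 2) =
        (2 / Real.pi) ^ ((Fintype.card m : ℝ) / 2) * (2 / Real.pi) ^ ((Fintype.card n : ℝ) / 2) := by
      rw [Fintype.card_sum, Nat.cast_add, add_div, Real.rpow_add (by positivity)]
    rw [nuDensH, nuDensH, nuDensH, if_pos (hSchur.2 hS), if_pos hA, if_pos hS,
      nuExponent_fromBlocks B D hA.det_pos.ne'.isUnit hS.det_pos.ne'.isUnit hAs, Real.exp_add,
      hdet, Real.sqrt_mul hA.det_pos.le, hpow, Fintype.prod_sum_type]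
    simp only [Sum.elim_inl, Sum.elim_inr]
    ring
  · rw [nuDensH, nuDensH, nuDensH, if_neg (mt hSchur.1 hS), if_neg hS, mul_zero]

theorem Hmat_add (W M : Matrix m m ℝ) (β : m → ℝ) : Hmat (W + M) β = Hmat W β - M := by
  rw [Hmat, Hmat, sub_add_eq_sub_sub]

theorem Hmat_fromBlocks (P : Matrix m m ℝ) (Q : Matrix m n ℝ) (Q' : Matrix n m ℝ)
    (R : Matrix n n ℝ) (β₁ : m → ℝ) (β₂ : n → ℝ) :
    Hmat (fromBlocks P Q Q' R) (β₁ ⊕ᵥ β₂) = fromBlocks (Hmat P β₁) (-Q) (-Q') (Hmat R β₂) := by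
  ext (i | i) (j | j) <;> simp [Hmat, diagonal_apply]

theorem nuDens_fromBlocks {P : Matrix m m ℝ} (Q : Matrix m n ℝ) (R : Matrix n n ℝ)
    {β₁ : m → ℝ} (hA : (Hmat P β₁).PosDef) (β₂ : n → ℝ) (x a : m → ℝ) (y b : n → ℝ) :
    nuDens (fromBlocks P Q Qᵀ R) (x ⊕ᵥ y) (a ⊕ᵥ b) (β₁ ⊕ᵥ β₂) =
      nuDens P x (a + Q *ᵥ y) β₁ *
        nuDens (R + Qᵀ * (Hmat P β₁)⁻¹ * Q) y (b + (Qᵀ * (Hmat P β₁)⁻¹) *ᵥ a) β₂ := by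
  rw [nuDens_eq_nuDensH, Hmat_fromBlocks, ← transpose_neg, nuDensH_fromBlocks _ _ hA,
    nuDens_eq_nuDensH, nuDens_eq_nuDensH, Hmat_add]
  simp only [neg_mulVec, sub_neg_eq_add, transpose_neg, Matrix.neg_mul, Matrix.mul_neg, neg_neg]

end Blocks

namespace Finset

variable {V : Type*} [DecidableEq V] [Fintype V] (U : Finset V)

def sumComplEquiv : ↥U ⊕ ↥(Uᶜ) ≃ V :=
  (Equiv.sumCongr (Equiv.refl U) (Equiv.subtypeEquivRight fun _ => mem_compl)).trans
    (Equiv.sumCompl (· ∈ U))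

theorem submatrix_sumComplEquiv {α : Type*} (M : Matrix V V α) :
    M.submatrix U.sumComplEquiv U.sumComplEquiv =
      Matrix.fromBlocks (M.submatrix (↑) (↑)) (M.submatrix (↑) (↑)) (M.submatrix (↑) (↑))
        (M.submatrix (↑) (↑)) := by
  ext (i | i) (j | j) <;> rfl

theorem comp_sumComplEquiv {α : Type*} (v : V → α) :
    v ∘ U.sumComplEquiv = (fun i : ↥U => v i) ⊕ᵥ (fun i : ↥(Uᶜ) => v i) := by
  ext (i | i) <;> rfl

end Finset

theorem nu_density_factorization_general (N : ℕ) (W : Matrix (Fin N) (Fin N) ℝ)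
    (hWsymm : W.IsSymm) (θ η : Fin N → ℝ) (U : Finset (Fin N)) (β : Fin N → ℝ) :
    (¬ ((Hmat W β).submatrix (fun i : ↥U => (i : Fin N)) (fun j : ↥U => (j : Fin N))).PosDef
        → nuDens W θ η β = 0) ∧
    (((Hmat W β).submatrix (fun i : ↥U => (i : Fin N)) (fun j : ↥U => (j : Fin N))).PosDef
        → nuDens W θ η β =
      nuDens (W.submatrix (fun i : ↥U => (i : Fin N)) (fun j : ↥U => (j : Fin N)))
          (fun i : ↥U => θ i)
          (fun i : ↥U => η i + ∑ j ∈ Uᶜ, W i j * θ j)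
          (fun i : ↥U => β i) *
      nuDens
          (W.submatrix (fun i : ↥(Uᶜ) => (i : Fin N)) (fun j : ↥(Uᶜ) => (j : Fin N)) +
            W.submatrix (fun i : ↥(Uᶜ) => (i : Fin N)) (fun j : ↥U => (j : Fin N)) *
              ((Hmat W β).submatrix (fun i : ↥U => (i : Fin N)) (fun j : ↥U => (j : Fin N)))⁻¹ *
              W.submatrix (fun i : ↥U => (i : Fin N)) (fun j : ↥(Uᶜ) => (j : Fin N)))
          (fun i : ↥(Uᶜ) => θ i)
          ((fun i : ↥(Uᶜ) => η i) +
            (W.submatrix (fun i : ↥(Uᶜ) => (i : Fin N)) (fun j : ↥U => (j : Fin N)) *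
              ((Hmat W β).submatrix (fun i : ↥U => (i : Fin N)) (fun j : ↥U => (j : Fin N)))⁻¹)
              *ᵥ (fun i : ↥U => η i))
          (fun i : ↥(Uᶜ) => β i)) := by
  refine ⟨fun hA => nuDensH_eq_zero_of_not_posDef_submatrix Subtype.val_injective hA θ η,
    fun hA => ?_⟩
  have hWt : (W.submatrix (↑) (↑) : Matrix ↥U ↥(Uᶜ) ℝ)ᵀ = W.submatrix (↑) (↑) := by
    rw [transpose_submatrix, hWsymm.eq]
  have hblocks : W.submatrix U.sumComplEquiv U.sumComplEquiv =
      fromBlocks (W.submatrix (↑) (↑)) (W.submatrix (↑) (↑)) (W.submatrix (↑) (↑))ᵀ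
        (W.submatrix (↑) (↑)) := by
    rw [U.submatrix_sumComplEquiv, hWt]
  rw [Hmat_submatrix W β Subtype.val_injective] at hA ⊢
  rw [← nuDens_submatrix_equiv U.sumComplEquiv, hblocks, U.comp_sumComplEquiv,
    U.comp_sumComplEquiv, U.comp_sumComplEquiv, nuDens_fromBlocks _ _ hA, hWt]
  have hη : (fun i : ↥U => η i) + W.submatrix (↑) (↑) *ᵥ (fun j : ↥(Uᶜ) => θ j) =
      fun i : ↥U => η i + ∑ j ∈ Uᶜ, W i j * θ j := by
    ext i
    exact congrArg _ (Finset.sum_coe_sort Uᶜ fun j => W i j * θ j)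
  rw [hη]

/-- The density of `ν_V^{W,θ,η}` factorizes pointwise as the product of the marginal
density on `U` and the conditional density on `Uᶜ`; when `(H_β)_{U,U}` is not positive
definite, the density vanishes. -/
theorem nu_density_factorization (N : ℕ) (W : Matrix (Fin N) (Fin N) ℝ)
    (hWsymm : W.IsSymm) (hWnonneg : ∀ i j, 0 ≤ W i j)
    (hconn : (SimpleGraph.fromRel (fun i j => 0 < W i j)).Connected)
    (θ η : Fin N → ℝ) (hθ : ∀ i, 0 < θ i) (hη : ∀ i, 0 ≤ η i)
    (U : Finset (Fin N)) (hU : U.Nonempty) (hUproper : U ≠ Finset.univ)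
    (β : Fin N → ℝ) :
    (¬ ((Hmat W β).submatrix (fun i : ↥U => (i : Fin N)) (fun j : ↥U => (j : Fin N))).PosDef
        → nuDens W θ η β = 0) ∧
    (((Hmat W β).submatrix (fun i : ↥U => (i : Fin N)) (fun j : ↥U => (j : Fin N))).PosDef
        → nuDens W θ η β =
      nuDens (W.submatrix (fun i : ↥U => (i : Fin N)) (fun j : ↥U => (j : Fin N)))
          (fun i : ↥U => θ i)
          (fun i : ↥U => η i + ∑ j ∈ Uᶜ, W i j * θ j)
          (fun i : ↥U => β i) *
      nuDens
          (W.submatrix (fun i : ↥(Uᶜ) => (i : Fin N)) (fun j : ↥(Uᶜ) => (j : Fin N)) +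
            W.submatrix (fun i : ↥(Uᶜ) => (i : Fin N)) (fun j : ↥U => (j : Fin N)) *
              ((Hmat W β).submatrix (fun i : ↥U => (i : Fin N)) (fun j : ↥U => (j : Fin N)))⁻¹ *
              W.submatrix (fun i : ↥U => (i : Fin N)) (fun j : ↥(Uᶜ) => (j : Fin N)))
          (fun i : ↥(Uᶜ) => θ i)
          ((fun i : ↥(Uᶜ) => η i) +
            (W.submatrix (fun i : ↥(Uᶜ) => (i : Fin N)) (fun j : ↥U => (j : Fin N)) *
              ((Hmat W β).submatrix (fun i : ↥U => (i : Fin N)) (fun j : ↥U => (j : Fin N)))⁻¹)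
              *ᵥ (fun i : ↥U => η i))
          (fun i : ↥(Uᶜ) => β i)) :=
  nu_density_factorization_general N W hWsymm θ η U β
end

section
/- Let β' ∈ ℝ^V be defined by β'_i = θ_i² β_i, let W' be the symmetric matrix with entries W'_{i,j} = θ_i θ_j W_{i,j}, and let η'_i = θ_i η_i. Then β is distributed according to ν_V^{W,θ,η} if and only if β' is distributed according to ν_V^{W',1,η'}; that is, the pushforward of ν_V^{W,θ,η} by the map β ↦ (θ_i² β_i)_{i∈V} equals ν_V^{W',1,η'}, where 1 denotes the all-ones vector. -/
open MeasureTheory Matrix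

/-- The measure `ν_V^{W,θ,η}` on `ℝ^V`. -/
noncomputable def nuMeasure {V : Type*} [Fintype V] [DecidableEq V]
    (W : Matrix V V ℝ) (θ η : V → ℝ) : Measure (V → ℝ) :=
  volume.withDensity (fun β => ENNReal.ofReal (nuDens W θ η β))

/-!
Write `D = diag θ`. The substitution `β' = θ² β` turns `H_β` into `D H_β D`, the matrix `H'`
built from `W' = D W D`. Congruence by `D` preserves positive definiteness, carries the quadratic
forms `⟨θ, H θ⟩`, `⟨η, H⁻¹ η⟩` to `⟨1, H' 1⟩`, `⟨η', H'⁻¹ η'⟩`, and multiplies the determinant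
by `(∏ θᵢ)²`. So the density of `ν^{W,θ,η}` at `β` is `∏ θᵢ²` times the density of
`ν^{W',1,η'}` at `θ² β`, and `∏ θᵢ²` is exactly the Jacobian of the substitution.
-/

open scoped ENNReal

section DiagonalConjugation

variable {V : Type*} [Fintype V] [DecidableEq V]

lemma Hmat_rescale (W : Matrix V V ℝ) (θ β : V → ℝ) :
    Hmat (Matrix.of fun i j => θ i * θ j * W i j) (fun i => θ i ^ 2 * β i) =
      diagonal θ * Hmat W β * diagonal θ := by
  ext i j
  by_cases h : i = j <;> simp [Hmat, h] <;> ring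

lemma posDef_diagonal_conj_iff {A : Matrix V V ℝ} {θ : V → ℝ} (hθ : ∀ i, θ i ≠ 0) :
    (diagonal θ * A * diagonal θ).PosDef ↔ A.PosDef := by
  have hunit : IsUnit (diagonal θ) := by
    simpa [isUnit_iff_isUnit_det, det_diagonal, Finset.prod_ne_zero_iff] using hθ
  simpa [star_eq_conjTranspose] using IsUnit.posDef_star_left_conjugate_iff (x := A) hunit

lemma dotProduct_diagonal_conj_mulVec {R : Type*} [CommSemiring R] (A : Matrix V V R)
    (θ x y : V → R) :
    x ⬝ᵥ ((diagonal θ * A * diagonal θ) *ᵥ y) = (θ * x) ⬝ᵥ (A *ᵥ (θ * y)) := by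
  have hy : diagonal θ *ᵥ y = θ * y := funext fun i => mulVec_diagonal θ y i
  have hx : x ᵥ* diagonal θ = θ * x :=
    funext fun i => (vecMul_diagonal x θ i).trans (mul_comm _ _)
  rw [← mulVec_mulVec, ← mulVec_mulVec, hy, dotProduct_mulVec, hx]

lemma diagonal_conj_inv {K : Type*} [Field K] (A : Matrix V V K) {θ : V → K}
    (hθ : ∀ i, θ i ≠ 0) :
    (diagonal θ * A * diagonal θ)⁻¹ = diagonal θ⁻¹ * A⁻¹ * diagonal θ⁻¹ := by
  have hinv : (diagonal θ)⁻¹ = diagonal θ⁻¹ := by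
    refine inv_eq_left_inv ?_
    rw [diagonal_mul_diagonal, ← diagonal_one]
    exact congrArg diagonal (funext fun i => inv_mul_cancel₀ (hθ i))
  rw [Matrix.mul_inv_rev, Matrix.mul_inv_rev, hinv, mul_assoc]

lemma det_diagonal_conj {R : Type*} [CommRing R] (A : Matrix V V R) (θ : V → R) :
    (diagonal θ * A * diagonal θ).det = (∏ i, θ i) ^ 2 * A.det := by
  rw [det_mul, det_mul, det_diagonal]
  ring

end DiagonalConjugation

lemma nuDens_eq_mul_nuDens_rescale {V : Type*} [Fintype V] [DecidableEq V]
    (W : Matrix V V ℝ) {θ : V → ℝ} (hθ : ∀ i, 0 < θ i) (η β : V → ℝ) :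
    nuDens W θ η β = (∏ i, θ i ^ 2) *
      nuDens (Matrix.of fun i j => θ i * θ j * W i j) (fun _ => 1) (fun i => θ i * η i)
        (fun i => θ i ^ 2 * β i) := by
  have hθ0 : ∀ i, θ i ≠ 0 := fun i => (hθ i).ne'
  rw [nuDens, nuDens, Hmat_rescale, posDef_diagonal_conj_iff hθ0]
  split_ifs with hH
  · have hone : θ * (fun _ => 1) = θ := mul_one θ
    have hη : θ⁻¹ * (fun i => θ i * η i) = η :=
      funext fun i => inv_mul_cancel_left₀ (hθ0 i) _
    have hlin : (fun i => θ i * η i) ⬝ᵥ (fun _ => 1) = η ⬝ᵥ θ := by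
      simp [dotProduct, mul_comm]
    have hprod : 0 < ∏ i, θ i := Finset.prod_pos fun i _ => hθ i
    rw [dotProduct_diagonal_conj_mulVec, diagonal_conj_inv _ hθ0, dotProduct_diagonal_conj_mulVec,
      hone, hη, hlin, det_diagonal_conj, Real.sqrt_mul (sq_nonneg _), Real.sqrt_sq hprod.le,
      Finset.prod_pow, Finset.prod_const_one]
    field_simp
  · simp

lemma MeasurableEmbedding.map_withDensity_comp {α β : Type*} [MeasurableSpace α]
    [MeasurableSpace β] {f : α → β} (hf : MeasurableEmbedding f) (μ : Measure α)
    (g : β → ℝ≥0∞) : (μ.withDensity (g ∘ f)).map f = (μ.map f).withDensity g := by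
  ext s hs
  rw [hf.map_apply, withDensity_apply _ (hf.measurable hs), withDensity_apply _ hs,
    hf.restrict_map, hf.lintegral_map]
  rfl

section PiScaling

variable {ι : Type*} [Fintype ι] {c : ι → ℝ}

lemma measurableEmbedding_pi_mul (hc : ∀ i, c i ≠ 0) :
    MeasurableEmbedding fun (x : ι → ℝ) i => c i * x i :=
  (Homeomorph.piCongrRight fun i => Homeomorph.mulLeft₀ (c i) (hc i)).measurableEmbedding

lemma map_pi_mul_volume (hc : ∀ i, c i ≠ 0) :
    Measure.map (fun (x : ι → ℝ) i => c i * x i) volume =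
      ENNReal.ofReal |∏ i, c i|⁻¹ • volume := by
  classical
  have hdet : (diagonal c).det ≠ 0 := by
    simpa [det_diagonal, Finset.prod_ne_zero_iff] using hc
  have hlin : (fun (x : ι → ℝ) i => c i * x i) = toLin' (diagonal c) :=
    funext fun x => funext fun i => (mulVec_diagonal c x i).symm
  rw [hlin, Real.map_matrix_volume_pi_eq_smul_volume_pi hdet, det_diagonal, abs_inv]

lemma map_pi_mul_withDensity (hc : ∀ i, c i ≠ 0) (g : (ι → ℝ) → ℝ≥0∞) :
    Measure.map (fun (x : ι → ℝ) i => c i * x i)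
        (volume.withDensity fun x => ENNReal.ofReal |∏ i, c i| * g fun i => c i * x i) =
      volume.withDensity g := by
  have hprod : 0 < |∏ i, c i| := abs_pos.2 (Finset.prod_ne_zero_iff.2 fun i _ => hc i)
  change Measure.map _ (volume.withDensity (ENNReal.ofReal |∏ i, c i| • (g ∘ _))) = _
  rw [withDensity_smul' _ _ ENNReal.ofReal_ne_top, Measure.map_smul,
    (measurableEmbedding_pi_mul hc).map_withDensity_comp, map_pi_mul_volume hc,
    withDensity_smul_measure, smul_smul, ← ENNReal.ofReal_mul hprod.le,
    mul_inv_cancel₀ hprod.ne', ENNReal.ofReal_one, one_smul]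

end PiScaling

theorem nu_change_of_variables_general (N : ℕ) (W : Matrix (Fin N) (Fin N) ℝ)
    (θ η : Fin N → ℝ) (hθ : ∀ i, 0 < θ i) :
    Measure.map (fun β : Fin N → ℝ => fun i => θ i ^ 2 * β i) (nuMeasure W θ η) =
      nuMeasure (Matrix.of fun i j => θ i * θ j * W i j) (fun _ => 1)
        (fun i => θ i * η i) := by
  set W' : Matrix (Fin N) (Fin N) ℝ := Matrix.of fun i j => θ i * θ j * W i j
  set η' : Fin N → ℝ := fun i => θ i * η i
  have hprod : 0 < ∏ i, θ i ^ 2 := Finset.prod_pos fun i _ => pow_pos (hθ i) 2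
  have hdens (β : Fin N → ℝ) : ENNReal.ofReal (nuDens W θ η β) =
      ENNReal.ofReal |∏ i, θ i ^ 2| *
        ENNReal.ofReal (nuDens W' (fun _ => 1) η' fun i => θ i ^ 2 * β i) := by
    rw [nuDens_eq_mul_nuDens_rescale W hθ, abs_of_pos hprod, ENNReal.ofReal_mul hprod.le]
  simp_rw [nuMeasure, hdens]
  exact map_pi_mul_withDensity (fun i => pow_ne_zero 2 (hθ i).ne')
    fun β => ENNReal.ofReal (nuDens W' (fun _ => 1) η' β)

/-- Change of variables: if `β ~ ν_V^{W,θ,η}` then `β'_i = θ_i² β_i` is distributed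
according to `ν_V^{W',1,η'}` with `W'_{i,j} = θ_i θ_j W_{i,j}` and `η'_i = θ_i η_i`. -/
theorem nu_change_of_variables (N : ℕ) (W : Matrix (Fin N) (Fin N) ℝ)
    (hWsymm : W.IsSymm) (hWnonneg : ∀ i j, 0 ≤ W i j)
    (hconn : (SimpleGraph.fromRel (fun i j => 0 < W i j)).Connected)
    (θ η : Fin N → ℝ) (hθ : ∀ i, 0 < θ i) (hη : ∀ i, 0 ≤ η i) :
    Measure.map (fun β : Fin N → ℝ => fun i => θ i ^ 2 * β i) (nuMeasure W θ η) =
      nuMeasure (Matrix.of fun i j => θ i * θ j * W i j) (fun _ => 1)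
        (fun i => θ i * η i) :=
  nu_change_of_variables_general N W θ η hθ
end

section
/- For all real numbers λ > 0, μ > 0 and ζ ≥ 0, one has ∫₀^∞ exp(−ζ/(2x)) · √(λ/(2π x³)) · exp(−λ(x − μ)²/(2μ² x)) dx = (√λ/√(ζ + λ)) · exp(−(√λ/μ)(√(ζ + λ) − √λ)). In particular (case ζ = 0) the inverse Gaussian density integrates to 1. -/
open MeasureTheory Real Set

/-!
Substituting `x = t²` and writing `λ = 2s²`, `ζ + λ = 2r²` turns the integrand into
`(2s/√π) exp(2s(s - r)/μ) f(t)/t²` with `f(t) = exp(-(αt - β/t)²)`, `α = s/μ`, `β = r`.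
The map `t ↦ αt - β/t` is an increasing bijection of `(0, ∞)` onto `ℝ` with derivative
`α + β/t²`, so `∫ (α + β/t²) f = ∫ exp(-u²) = √π`, while the inversion `t ↦ β/(αt)` fixes `f`
and gives `α ∫ f = β ∫ f/t²`. Hence `∫ f/t² = √π/(2β)`.
-/

section Substitution

variable {E : Type*} [NormedAddCommGroup E] [NormedSpace ℝ E]

theorem integral_Ioi_comp_div (g : ℝ → E) {c : ℝ} (hc : 0 < c) :
    ∫ t in Ioi 0, (c / t ^ 2) • g (c / t) = ∫ u in Ioi 0, g u := by
  have himage : (fun t => c / t) '' Ioi 0 = Ioi 0 := by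
    refine Subset.antisymm (image_subset_iff.2 fun t ht => div_pos hc ht) fun u hu => ?_
    exact ⟨c / u, div_pos hc hu, div_div_cancel₀ hc.ne'⟩
  have hderiv : ∀ t ∈ Ioi (0 : ℝ), HasDerivWithinAt (fun t => c / t) (-(c / t ^ 2)) (Ioi 0) t :=
    fun t ht => by
      simpa [div_eq_mul_inv] using ((hasDerivAt_inv (ne_of_gt ht)).const_mul c).hasDerivWithinAt
  have hinj : InjOn (fun t => c / t) (Ioi 0) := fun _ _ _ _ h =>
    inv_injective ((mul_right_inj' hc.ne').1 h)
  have := integral_image_eq_integral_abs_deriv_smul measurableSet_Ioi hderiv hinj g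
  rw [himage] at this
  rw [this]
  refine setIntegral_congr_fun measurableSet_Ioi fun t ht => ?_
  rw [abs_neg, abs_of_pos (div_pos hc (pow_pos ht 2))]

theorem hasDerivAt_mul_sub_div (α β : ℝ) {t : ℝ} (ht : t ≠ 0) :
    HasDerivAt (fun t => α * t - β / t) (α + β / t ^ 2) t := by
  have := ((hasDerivAt_id t).const_mul α).fun_sub ((hasDerivAt_inv ht).const_mul β)
  simpa [div_eq_mul_inv] using this

theorem hasDerivWithinAt_mul_sub_div_Ioi (α β : ℝ) :
    ∀ t ∈ Ioi (0 : ℝ), HasDerivWithinAt (fun t => α * t - β / t) (α + β / t ^ 2) (Ioi 0) t :=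
  fun _ ht => (hasDerivAt_mul_sub_div α β (ne_of_gt ht)).hasDerivWithinAt

variable {α β : ℝ}

theorem strictMonoOn_mul_sub_div (hα : 0 < α) (hβ : 0 < β) :
    StrictMonoOn (fun t => α * t - β / t) (Ioi 0) := by
  refine strictMonoOn_of_deriv_pos (convex_Ioi 0) (fun t ht => ?_) fun t ht => ?_
  · exact (hasDerivAt_mul_sub_div α β (ne_of_gt ht)).continuousAt.continuousWithinAt
  · rw [interior_Ioi] at ht
    rw [(hasDerivAt_mul_sub_div α β (ne_of_gt ht)).deriv]
    positivity

theorem image_mul_sub_div_Ioi (hα : 0 < α) (hβ : 0 < β) :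
    (fun t => α * t - β / t) '' Ioi 0 = univ := by
  refine eq_univ_of_forall fun y => ?_
  -- the positive root of `α t² - y t - β`
  set D := √(y ^ 2 + 4 * α * β)
  have hD : D ^ 2 = y ^ 2 + 4 * α * β := sq_sqrt (by positivity)
  have hyD : 0 < y + D := by nlinarith [sqrt_nonneg (y ^ 2 + 4 * α * β)]
  refine ⟨(y + D) / (2 * α), div_pos hyD (by positivity), ?_⟩
  field_simp
  linear_combination hD

theorem integral_Ioi_comp_mul_sub_div (hα : 0 < α) (hβ : 0 < β) (g : ℝ → E) :
    ∫ t in Ioi 0, (α + β / t ^ 2) • g (α * t - β / t) = ∫ u, g u := by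
  have := integral_image_eq_integral_abs_deriv_smul measurableSet_Ioi
    (hasDerivWithinAt_mul_sub_div_Ioi α β) (strictMonoOn_mul_sub_div hα hβ).injOn g
  rw [image_mul_sub_div_Ioi hα hβ, setIntegral_univ] at this
  rw [this]
  refine setIntegral_congr_fun measurableSet_Ioi fun t ht => ?_
  rw [abs_of_pos (by have : (0 : ℝ) < t := ht; positivity)]

theorem integrableOn_Ioi_comp_mul_sub_div_iff (hα : 0 < α) (hβ : 0 < β) (g : ℝ → E) :
    IntegrableOn (fun t => (α + β / t ^ 2) • g (α * t - β / t)) (Ioi 0) ↔ Integrable g := by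
  have := integrableOn_image_iff_integrableOn_abs_deriv_smul measurableSet_Ioi
    (hasDerivWithinAt_mul_sub_div_Ioi α β) (strictMonoOn_mul_sub_div hα hβ).injOn g
  rw [image_mul_sub_div_Ioi hα hβ, integrableOn_univ] at this
  rw [this]
  refine integrableOn_congr_fun (fun t ht => ?_) measurableSet_Ioi
  rw [abs_of_pos (by have : (0 : ℝ) < t := ht; positivity)]

end Substitution

theorem integral_exp_neg_sq_mul_sub_div_div_sq {α β : ℝ} (hα : 0 < α) (hβ : 0 < β) :
    ∫ t in Ioi 0, exp (-(α * t - β / t) ^ 2) / t ^ 2 = √π / (2 * β) := by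
  set f : ℝ → ℝ := fun t => exp (-(α * t - β / t) ^ 2)
  have hf_meas : Measurable f := by fun_prop
  have hgauss : Integrable fun u : ℝ => exp (-u ^ 2) := by
    simpa using integrable_exp_neg_mul_sq one_pos
  have hsum_int : IntegrableOn (fun t => (α + β / t ^ 2) * f t) (Ioi 0) :=
    (integrableOn_Ioi_comp_mul_sub_div_iff hα hβ _).2 hgauss
  have hsum : ∫ t in Ioi 0, (α + β / t ^ 2) * f t = √π := by
    simpa using (integral_Ioi_comp_mul_sub_div hα hβ fun u => exp (-u ^ 2)).trans
      (by simpa using integral_gaussian 1)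
  have hf_int : IntegrableOn f (Ioi 0) := by
    refine (hsum_int.const_mul α⁻¹).mono' hf_meas.aestronglyMeasurable ?_
    filter_upwards [ae_restrict_mem measurableSet_Ioi] with t ht
    have ht : (0 : ℝ) < t := ht
    rw [norm_of_nonneg (exp_pos _).le]
    calc f t = α⁻¹ * (α * f t) := by field_simp
      _ ≤ α⁻¹ * ((α + β / t ^ 2) * f t) := by
        gcongr
        exact le_add_of_nonneg_right (by positivity)
  have hg_int : IntegrableOn (fun t => f t / t ^ 2) (Ioi 0) := by
    have hg_meas : Measurable fun t => f t / t ^ 2 := by fun_prop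
    refine (hsum_int.const_mul β⁻¹).mono' hg_meas.aestronglyMeasurable ?_
    filter_upwards [ae_restrict_mem measurableSet_Ioi] with t ht
    have ht : (0 : ℝ) < t := ht
    rw [norm_of_nonneg (by positivity)]
    calc f t / t ^ 2 = β⁻¹ * (β / t ^ 2 * f t) := by field_simp
      _ ≤ β⁻¹ * ((α + β / t ^ 2) * f t) := by
        gcongr
        exact le_add_of_nonneg_left hα.le
  have hsymm : α * ∫ t in Ioi 0, f t = β * ∫ t in Ioi 0, f t / t ^ 2 := by
    rw [← integral_const_mul, ← integral_const_mul,
      ← integral_Ioi_comp_div (fun t => α * f t) (div_pos hβ hα)]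
    refine setIntegral_congr_fun measurableSet_Ioi fun t ht => ?_
    have ht : t ≠ 0 := ne_of_gt ht
    have hinv : α * (β / α / t) - β / (β / α / t) = -(α * t - β / t) := by field_simp; ring
    simp only [f, smul_eq_mul, hinv, neg_sq]
    field_simp
  have hsplit : ∫ t in Ioi 0, (α + β / t ^ 2) * f t
      = α * (∫ t in Ioi 0, f t) + β * ∫ t in Ioi 0, f t / t ^ 2 := by
    rw [← integral_const_mul, ← integral_const_mul,
      ← integral_add (hf_int.const_mul α) (hg_int.const_mul β)]
    congr 1 with t
    ring
  rw [hsplit, hsymm] at hsum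
  show ∫ t in Ioi 0, f t / t ^ 2 = _
  rw [eq_div_iff (by positivity)]
  linarith

theorem two_mul_inverseGaussian_integrand_sq {μ s r t : ℝ} (hμ : μ ≠ 0) (hs : 0 ≤ s)
    (ht : 0 < t) :
    2 * t * (exp (-(2 * r ^ 2 - 2 * s ^ 2) / (2 * t ^ 2)) *
      (√(2 * s ^ 2 / (2 * π * (t ^ 2) ^ 3)) *
        exp (-(2 * s ^ 2) * (t ^ 2 - μ) ^ 2 / (2 * μ ^ 2 * t ^ 2)))) =
      2 * s / √π * exp (2 * s * (s - r) / μ) * (exp (-(s / μ * t - r / t) ^ 2) / t ^ 2) := by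
  have hsqrt : √(2 * s ^ 2 / (2 * π * (t ^ 2) ^ 3)) = s / (√π * t ^ 3) := by
    rw [show 2 * s ^ 2 / (2 * π * (t ^ 2) ^ 3) = (s / (√π * t ^ 3)) ^ 2 by
      rw [div_pow, mul_pow, sq_sqrt pi_pos.le]; field_simp, sqrt_sq (by positivity)]
  have hexp : -(2 * r ^ 2 - 2 * s ^ 2) / (2 * t ^ 2) +
      -(2 * s ^ 2) * (t ^ 2 - μ) ^ 2 / (2 * μ ^ 2 * t ^ 2) =
        2 * s * (s - r) / μ + -(s / μ * t - r / t) ^ 2 := by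
    field_simp
    ring
  calc _ = 2 * s / √π * (exp (-(2 * r ^ 2 - 2 * s ^ 2) / (2 * t ^ 2)) *
        exp (-(2 * s ^ 2) * (t ^ 2 - μ) ^ 2 / (2 * μ ^ 2 * t ^ 2))) / t ^ 2 := by
        rw [hsqrt]; field_simp
    _ = _ := by rw [← exp_add, hexp, exp_add]; ring

/-- Laplace transform of the inverse of an inverse Gaussian random variable: for
`λ > 0`, `μ > 0`, `ζ ≥ 0`,
`∫₀^∞ exp(−ζ/(2x)) √(λ/(2πx³)) exp(−λ(x−μ)²/(2μ²x)) dx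
  = (√λ/√(ζ+λ)) exp(−(√λ/μ)(√(ζ+λ) − √λ))`. -/
theorem inverse_gaussian_laplace (lam μ ζ : ℝ) (hlam : 0 < lam) (hμ : 0 < μ) (hζ : 0 ≤ ζ) :
    ∫ x in Set.Ioi (0:ℝ),
        Real.exp (-ζ / (2 * x)) * (Real.sqrt (lam / (2 * Real.pi * x ^ 3)) *
          Real.exp (-lam * (x - μ) ^ 2 / (2 * μ ^ 2 * x))) =
      Real.sqrt lam / Real.sqrt (ζ + lam) *
        Real.exp (-(Real.sqrt lam / μ) * (Real.sqrt (ζ + lam) - Real.sqrt lam)) := by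
  obtain ⟨s, hs, rfl⟩ : ∃ s, 0 < s ∧ lam = 2 * s ^ 2 :=
    ⟨√(lam / 2), by positivity, by rw [sq_sqrt (by positivity)]; ring⟩
  obtain ⟨r, hr, rfl⟩ : ∃ r, 0 < r ∧ ζ = 2 * r ^ 2 - 2 * s ^ 2 :=
    ⟨√((ζ + 2 * s ^ 2) / 2), by positivity, by rw [sq_sqrt (by positivity)]; ring⟩
  rw [← integral_comp_rpow_Ioi_of_pos two_pos]
  norm_num only [rpow_two, smul_eq_mul, rpow_one]
  rw [setIntegral_congr_fun measurableSet_Ioi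
      fun t ht => two_mul_inverseGaussian_integrand_sq hμ.ne' hs.le ht,
    integral_const_mul, integral_exp_neg_sq_mul_sub_div_div_sq (by positivity) hr,
    sub_add_cancel, sqrt_mul zero_le_two, sqrt_mul zero_le_two, sqrt_sq hs.le, sqrt_sq hr.le]
  have h2 : √2 * √2 = 2 := mul_self_sqrt zero_le_two
  rw [show -(√2 * s / μ) * (√2 * r - √2 * s) = 2 * s * (s - r) / μ by
    linear_combination (s * (s - r) / μ) * h2]
  field_simp
end

section
/- Let t⁰, t¹ ∈ (0,∞)^V be such that K_{t⁰} and K_{t⁰+t¹} are invertible, let η ∈ ℝ^V, and set W̃ = W K_{t⁰}^{-1}, η̃ = η + W̃ (diag(t⁰) η), and H̃_{1/(2t¹)} = diag(1/t¹) − W̃. Then ⟨η̃, (H̃_{1/(2t¹)})^{-1} η̃⟩ = ⟨η, (H_{1/(2(t⁰+t¹))})^{-1} η⟩ − ⟨η, (H_{1/(2t⁰)})^{-1} η⟩. -/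
open Matrix

/-- The matrix `K_t = Id - diag(t) W`. -/
noncomputable def Kmat {V : Type*} [Fintype V] [DecidableEq V]
    (W : Matrix V V ℝ) (t : V → ℝ) : Matrix V V ℝ :=
  1 - Matrix.diagonal t * W

/-- With `W̃ = W K_{t⁰}⁻¹`, `η̃ = η + W̃ (diag(t⁰) η)` and `H̃_{1/(2t¹)} = diag(1/t¹) - W̃`,
one has `⟨η̃, H̃_{1/(2t¹)}⁻¹ η̃⟩ = ⟨η, H_{1/(2(t⁰+t¹))}⁻¹ η⟩ - ⟨η, H_{1/(2t⁰)}⁻¹ η⟩`. -/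
theorem eta_tilde_quadratic_form (N : ℕ) (W : Matrix (Fin N) (Fin N) ℝ)
    (hWsymm : W.IsSymm) (hWnonneg : ∀ i j, 0 ≤ W i j)
    (t₀ t₁ : Fin N → ℝ) (ht₀ : ∀ i, 0 < t₀ i) (ht₁ : ∀ i, 0 < t₁ i)
    (hK₀ : IsUnit (Kmat W t₀)) (hK : IsUnit (Kmat W (t₀ + t₁)))
    (η : Fin N → ℝ) :
    (η + (W * (Kmat W t₀)⁻¹) *ᵥ (Matrix.diagonal t₀ *ᵥ η)) ⬝ᵥ
        ((Matrix.diagonal (fun i => 1 / t₁ i) - W * (Kmat W t₀)⁻¹)⁻¹ *ᵥ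
          (η + (W * (Kmat W t₀)⁻¹) *ᵥ (Matrix.diagonal t₀ *ᵥ η))) =
      η ⬝ᵥ ((Matrix.diagonal (fun i => 1 / (t₀ i + t₁ i)) - W)⁻¹ *ᵥ η) -
        η ⬝ᵥ ((Matrix.diagonal (fun i => 1 / t₀ i) - W)⁻¹ *ᵥ η) := by
  classical
  have hW : Wᵀ = W := hWsymm
  set D0 := Matrix.diagonal t₀ with hD0
  set D1 := Matrix.diagonal t₁ with hD1
  set K₀ := Kmat W t₀ with hK₀def
  set K := Kmat W (t₀ + t₁) with hKdef
  have hdK₀ : IsUnit K₀.det := (Matrix.isUnit_iff_isUnit_det _).mp hK₀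
  have hdK : IsUnit K.det := (Matrix.isUnit_iff_isUnit_det _).mp hK
  have hdK₀T : IsUnit (K₀ᵀ).det := by rwa [Matrix.det_transpose]
  have hK₀exp : K₀ = 1 - D0 * W := by rw [hK₀def, hD0]; rfl
  have hKexp : K = 1 - (D0 + D1) * W := by
    rw [hKdef, hD0, hD1, Matrix.diagonal_add]; rfl
  have hK₀T : K₀ᵀ = 1 - W * D0 := by
    rw [hK₀exp, Matrix.transpose_sub, Matrix.transpose_one, Matrix.transpose_mul, hW,
      Matrix.diagonal_transpose]
  -- diagonal inverses
  have h10 : Matrix.diagonal (fun i => 1 / t₀ i) * D0 = 1 := by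
    rw [hD0, Matrix.diagonal_mul_diagonal,
      show (fun i => 1 / t₀ i * t₀ i) = fun _ => (1 : ℝ) from
        funext fun i => one_div_mul_cancel (ht₀ i).ne', Matrix.diagonal_one]
  have h11 : Matrix.diagonal (fun i => 1 / t₁ i) * D1 = 1 := by
    rw [hD1, Matrix.diagonal_mul_diagonal,
      show (fun i => 1 / t₁ i * t₁ i) = fun _ => (1 : ℝ) from
        funext fun i => one_div_mul_cancel (ht₁ i).ne', Matrix.diagonal_one]
  have h1s : Matrix.diagonal (fun i => 1 / (t₀ i + t₁ i)) * (D0 + D1) = 1 := by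
    rw [hD0, hD1, Matrix.diagonal_add, Matrix.diagonal_mul_diagonal,
      show (fun i => 1 / (t₀ i + t₁ i) * (t₀ i + t₁ i)) = fun _ => (1 : ℝ) from
        funext fun i => one_div_mul_cancel (add_pos (ht₀ i) (ht₁ i)).ne', Matrix.diagonal_one]
  -- inverse of H₀
  have hfac0 : Matrix.diagonal (fun i => 1 / t₀ i) - W
      = Matrix.diagonal (fun i => 1 / t₀ i) * K₀ := by
    rw [hK₀exp, Matrix.mul_sub, Matrix.mul_one, ← Matrix.mul_assoc, h10, Matrix.one_mul]
  have hinv0 : (Matrix.diagonal (fun i => 1 / t₀ i) - W)⁻¹ = K₀⁻¹ * D0 := by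
    rw [hfac0, Matrix.mul_inv_rev, Matrix.inv_eq_right_inv h10]
  -- inverse of H
  have hfacs : Matrix.diagonal (fun i => 1 / (t₀ i + t₁ i)) - W
      = Matrix.diagonal (fun i => 1 / (t₀ i + t₁ i)) * K := by
    rw [hKexp, Matrix.mul_sub, Matrix.mul_one, ← Matrix.mul_assoc, h1s, Matrix.one_mul]
  have hinvs : (Matrix.diagonal (fun i => 1 / (t₀ i + t₁ i)) - W)⁻¹ = K⁻¹ * (D0 + D1) := by
    rw [hfacs, Matrix.mul_inv_rev, Matrix.inv_eq_right_inv h1s]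
  -- inverse of H̃
  have hdiagK : Matrix.diagonal (fun i => 1 / t₁ i) * K
      = Matrix.diagonal (fun i => 1 / t₁ i) * K₀ - W := by
    rw [hKexp, hK₀exp]
    have : Matrix.diagonal (fun i => 1 / t₁ i) * (1 - (D0 + D1) * W)
        = Matrix.diagonal (fun i => 1 / t₁ i) * (1 - D0 * W)
          - (Matrix.diagonal (fun i => 1 / t₁ i) * D1) * W := by noncomm_ring
    rw [this, h11, Matrix.one_mul]
  have hA : Matrix.diagonal (fun i => 1 / t₁ i) - W * K₀⁻¹
      = Matrix.diagonal (fun i => 1 / t₁ i) * K * K₀⁻¹ := by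
    rw [hdiagK, Matrix.sub_mul, Matrix.mul_assoc, Matrix.mul_nonsing_inv _ hdK₀, Matrix.mul_one]
  have hAinv : (Matrix.diagonal (fun i => 1 / t₁ i) - W * K₀⁻¹)⁻¹ = K₀ * (K⁻¹ * D1) := by
    rw [hA, Matrix.mul_inv_rev, Matrix.mul_inv_rev, Matrix.nonsing_inv_nonsing_inv _ hdK₀,
      Matrix.inv_eq_right_inv h11]
  -- η̃ = (K₀ᵀ)⁻¹ η
  have hone : K₀ᵀ * (1 + W * K₀⁻¹ * D0) = 1 := by
    have hKK : K₀ * K₀⁻¹ = 1 := Matrix.mul_nonsing_inv _ hdK₀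
    have hexp : K₀ᵀ * (1 + W * K₀⁻¹ * D0)
        = 1 + W * ((1 - D0 * W) * K₀⁻¹) * D0 - W * D0 := by
      rw [hK₀T]; noncomm_ring
    rw [hexp, ← hK₀exp, hKK, Matrix.mul_one]
    abel
  have hTinv : (K₀ᵀ)⁻¹ = 1 + W * K₀⁻¹ * D0 := Matrix.inv_eq_right_inv hone
  have hη : η + (W * K₀⁻¹) *ᵥ (D0 *ᵥ η) = (K₀ᵀ)⁻¹ *ᵥ η := by
    rw [hTinv, Matrix.mulVec_mulVec, Matrix.add_mulVec, Matrix.one_mulVec, Matrix.mul_assoc]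
  -- key matrix identity
  have hkey : K⁻¹ * D1 * (K₀ᵀ)⁻¹ = K⁻¹ * (D0 + D1) - K₀⁻¹ * D0 := by
    have h2 : (D0 + D1) * K₀ᵀ = K * D0 + D1 := by
      rw [hK₀T, hKexp]; noncomm_ring
    have hD0K : K₀⁻¹ * (D0 * K₀ᵀ) = D0 := by
      have : D0 * K₀ᵀ = K₀ * D0 := by rw [hK₀T, hK₀exp]; noncomm_ring
      rw [this, ← Matrix.mul_assoc, Matrix.nonsing_inv_mul _ hdK₀, Matrix.one_mul]
    have h3 : K⁻¹ * D1 = (K⁻¹ * (D0 + D1) - K₀⁻¹ * D0) * K₀ᵀ := by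
      rw [Matrix.sub_mul, Matrix.mul_assoc, Matrix.mul_assoc, hD0K, h2,
        Matrix.mul_add, ← Matrix.mul_assoc, Matrix.nonsing_inv_mul _ hdK, Matrix.one_mul]
      abel
    rw [h3, Matrix.mul_assoc, Matrix.mul_nonsing_inv _ hdK₀T, Matrix.mul_one]
  -- put it together
  rw [hη, hAinv, hinvs, hinv0, Matrix.mulVec_mulVec]
  have hTT : ((K₀ᵀ)⁻¹)ᵀ = K₀⁻¹ := by
    rw [← Matrix.transpose_nonsing_inv, Matrix.transpose_transpose]
  have hprod : K₀⁻¹ * (K₀ * (K⁻¹ * D1) * (K₀ᵀ)⁻¹) = K⁻¹ * D1 * (K₀ᵀ)⁻¹ := by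
    rw [← Matrix.mul_assoc, ← Matrix.mul_assoc, Matrix.nonsing_inv_mul _ hdK₀,
      Matrix.one_mul, Matrix.mul_assoc]
  rw [dotProduct_comm, Matrix.dotProduct_mulVec, ← Matrix.mulVec_transpose,
    Matrix.mulVec_mulVec, hTT, hprod, hkey, Matrix.sub_mulVec, sub_dotProduct]
  rw [dotProduct_comm ((K⁻¹ * (D0 + D1)) *ᵥ η) η,
    dotProduct_comm ((K₀⁻¹ * D0) *ᵥ η) η]
end

section
/- Let W = (W_{i,j})_{i,j∈V} be a symmetric matrix with nonnegative entries that is irreducible (the graph on V with edges {i,j} for i≠j with W_{i,j}>0 is connected), and let β ∈ ℝ^V be such that H_β = 2·diag(β) − W is positive definite. Then all entries of the inverse matrix (H_β)^{-1} are strictly positive: ((H_β)^{-1})_{i,j} > 0 for all i, j ∈ V. -/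
open Matrix

/-!
`H_β` is a positive definite matrix with nonpositive off-diagonal entries. For such a matrix,
`H x ≥ 0` forces `x ≥ 0`: pairing `H x` with the negative part `x⁻` gives
`0 ≤ x⁻ ⬝ H x⁺ - x⁻ ⬝ H x⁻`, where the first term is `≤ 0` because `x⁺` and `x⁻` have disjoint
supports, so `x⁻ = 0` by positive definiteness. If moreover `x ≠ 0`, the zero set of `x` is
closed under the edges `H a b < 0` (at a zero `a` of `x`, `(H x) a` is a sum of nonpositive
terms), so it is empty when this graph is connected. Applied to the columns `x = H⁻¹ e_j`,
which satisfy `H x = e_j`, this gives the positivity of `H⁻¹`.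
-/

namespace Matrix

variable {V : Type*} [Fintype V] {H : Matrix V V ℝ}

lemma negPart_dotProduct_mulVec_posPart_nonpos (hH : ∀ a b, a ≠ b → H a b ≤ 0)
    (x : V → ℝ) : x⁻ ⬝ᵥ H *ᵥ x⁺ ≤ 0 := by
  simp only [dotProduct, mulVec, Finset.mul_sum]
  refine Finset.sum_nonpos fun a _ => Finset.sum_nonpos fun b _ => ?_
  rw [Pi.negPart_apply, Pi.posPart_apply]
  rcases eq_or_ne a b with rfl | hab
  · have hdisj : (x a)⁻ * (x a)⁺ = 0 := by
      rcases le_total 0 (x a) with h | h <;> simp [h]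
    rw [mul_left_comm, hdisj, mul_zero]
  · exact mul_nonpos_of_nonneg_of_nonpos (negPart_nonneg _)
      (mul_nonpos_of_nonpos_of_nonneg (hH a b hab) (posPart_nonneg _))

lemma PosDef.nonneg_of_mulVec_nonneg (hpos : H.PosDef) (hH : ∀ a b, a ≠ b → H a b ≤ 0)
    {x : V → ℝ} (hx : 0 ≤ H *ᵥ x) : 0 ≤ x := by
  rw [← negPart_eq_zero]
  by_contra hneg
  have hquad : 0 < x⁻ ⬝ᵥ H *ᵥ x⁻ := by simpa using hpos.dotProduct_mulVec_pos hneg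
  have hpair : 0 ≤ x⁻ ⬝ᵥ H *ᵥ x := dotProduct_nonneg_of_nonneg (negPart_nonneg x) hx
  have hsplit : H *ᵥ x = H *ᵥ x⁺ - H *ᵥ x⁻ := by rw [← mulVec_sub, posPart_sub_negPart]
  rw [hsplit, dotProduct_sub] at hpair
  linarith [negPart_dotProduct_mulVec_posPart_nonpos hH x]

lemma eq_zero_of_mulVec_nonneg_of_eq_zero (hH : ∀ a b, a ≠ b → H a b ≤ 0)
    {x : V → ℝ} (hx : 0 ≤ x) {a b : V} (hHx : 0 ≤ (H *ᵥ x) a) (ha : x a = 0)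
    (hab : H a b < 0) : x b = 0 := by
  have hterm : ∀ k ∈ Finset.univ, H a k * x k ≤ 0 := by
    intro k _
    rcases eq_or_ne a k with rfl | hak
    · simp [ha]
    · exact mul_nonpos_of_nonpos_of_nonneg (hH a k hak) (hx k)
  have hsum : ∑ k, H a k * x k = 0 := le_antisymm (Finset.sum_nonpos hterm) hHx
  have hb := (Finset.sum_eq_zero_iff_of_nonpos hterm).mp hsum b (Finset.mem_univ b)
  exact (mul_eq_zero.mp hb).resolve_left hab.ne

lemma pos_of_mulVec_nonneg_of_connected (hH : ∀ a b, a ≠ b → H a b ≤ 0)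
    {G : SimpleGraph V} (hG : G.Connected) (hadj : ∀ a b, G.Adj a b → H a b < 0)
    {x : V → ℝ} (hx : 0 ≤ x) (hHx : 0 ≤ H *ᵥ x) (hx0 : x ≠ 0) (i : V) : 0 < x i := by
  refine (hx i).lt_of_ne' fun hi => ?_
  obtain ⟨m, hm⟩ := Function.ne_iff.mp hx0
  obtain ⟨d, -, hfst, hsnd⟩ :=
    (hG.preconnected i m).some.exists_boundary_dart {k | x k = 0} hi hm
  exact hsnd (eq_zero_of_mulVec_nonneg_of_eq_zero hH hx (hHx _) hfst (hadj _ _ d.adj))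

lemma PosDef.inv_apply_pos [DecidableEq V] (hpos : H.PosDef) (hH : ∀ a b, a ≠ b → H a b ≤ 0)
    {G : SimpleGraph V} (hG : G.Connected) (hadj : ∀ a b, G.Adj a b → H a b < 0) (i j : V) :
    0 < H⁻¹ i j := by
  have hcol : H *ᵥ (H⁻¹ *ᵥ Pi.single j 1) = Pi.single j 1 := by
    rw [mulVec_mulVec, mul_nonsing_inv H hpos.det_pos.ne'.isUnit, one_mulVec]
  have hHx : 0 ≤ H *ᵥ (H⁻¹ *ᵥ Pi.single j 1) := by
    rw [hcol]; exact Pi.single_nonneg.mpr zero_le_one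
  have hx0 : H⁻¹ *ᵥ Pi.single j 1 ≠ 0 := fun h => by
    simpa [h] using congrFun hcol j
  simpa [mulVec_single_one] using pos_of_mulVec_nonneg_of_connected hH hG hadj
    (hpos.nonneg_of_mulVec_nonneg hH hHx) hHx hx0 i

end Matrix

theorem H_inv_entries_pos_general (N : ℕ) (W : Matrix (Fin N) (Fin N) ℝ)
    (hWsymm : W.IsSymm) (hWnonneg : ∀ i j, 0 ≤ W i j)
    (hconn : (SimpleGraph.fromRel (fun i j => 0 < W i j)).Connected)
    (β : Fin N → ℝ) (hβ : (Hmat W β).PosDef) :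
    ∀ i j, 0 < (Hmat W β)⁻¹ i j := by
  have hoff : ∀ a b, a ≠ b → Hmat W β a b = -W a b := fun a b hab => by
    simp [Hmat, diagonal_apply_ne _ hab]
  refine hβ.inv_apply_pos (fun a b hab => ?_) hconn fun a b hadj => ?_
  · rw [hoff a b hab, neg_nonpos]; exact hWnonneg a b
  · obtain ⟨hab, hW⟩ := SimpleGraph.fromRel_adj _ a b |>.mp hadj
    rw [hoff a b hab, neg_neg_iff_pos]
    exact hW.elim id fun h => hWsymm.apply a b ▸ h

/-- If `W` is symmetric with nonnegative entries, irreducible (the associated graph is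
connected), and `H_β = 2 diag(β) - W` is positive definite, then all entries of
`(H_β)⁻¹` are strictly positive. -/
theorem H_inv_entries_pos (N : ℕ) (hN : 0 < N) (W : Matrix (Fin N) (Fin N) ℝ)
    (hWsymm : W.IsSymm) (hWnonneg : ∀ i j, 0 ≤ W i j)
    (hconn : (SimpleGraph.fromRel (fun i j => 0 < W i j)).Connected)
    (β : Fin N → ℝ) (hβ : (Hmat W β).PosDef) :
    ∀ i j, 0 < (Hmat W β)⁻¹ i j :=
  H_inv_entries_pos_general N W hWsymm hWnonneg hconn β hβ
end
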